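/- Let T > 0, C > 0, k ≥ 0, m > k with m ≥ 2, K > 0 and λ, ε, β > 0. Let w : (0,T)×H → ℝ be bounded on bounded subsets of (0,T)×H and satisfy w(t,x) ≥ −C(1+‖x‖^k) for all (t,x) ∈ (0,T)×H. Then for every R > 0 there exists a constant M > 0 such that the inf-convolution v = w_{λ,ε,β} satisfies |v(t,x) − v(s,y)| ≤ M(|t−s| + ‖x−y‖_{-2}) for all t,s ∈ (0,T) and all x,y ∈ B_R. -/

import Mathlib

/-!
Since `B ≥ 0` and `s < T`, the objective of the inf-convolution is bounded below by
`−C + (λ‖y‖^m − C‖y‖^k)`, which tends to `∞` with `‖y‖` because `k < m`; and testing the point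
`(s, 0)` bounds `v(s, y)` above uniformly on `(0,T) × B_R`. So all near-minimizers for `v(s, y)`
lie in one fixed ball. At such a point the objectives for `(t, x)` and `(s, y)` differ by at most
`M (|t − s| + ‖B(x − y)‖)`, because `⟨Ba, a⟩ − ⟨Bb, b⟩ = ⟨B(a − b), a + b⟩` for self-adjoint `B`
and `(t − s')² − (s − s')² = (t − s)(t + s − 2s')`.
-/

open scoped InnerProductSpace

/-- The inf-convolution
`w_{λ,ε,β}(t,x) = inf_{(s,y)∈(0,T)×H} { w(s,y) + ‖x−y‖₋₁²/(2ε) + (t−s)²/(2β) + λ e^{2mK(T−s)}‖y‖^m }`,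
where `‖z‖₋₁² = ⟨Bz,z⟩`. -/
noncomputable def infConv {H : Type*} [NormedAddCommGroup H] [InnerProductSpace ℝ H]
    (B : H →L[ℝ] H) (T m K lam ε β : ℝ) (w : ℝ → H → ℝ) (t : ℝ) (x : H) : ℝ :=
  sInf ((fun p : ℝ × H =>
      w p.1 p.2 + ⟪B (x - p.2), x - p.2⟫_ℝ / (2 * ε) + (t - p.1) ^ 2 / (2 * β)
        + lam * Real.exp (2 * m * K * (T - p.1)) * ‖p.2‖ ^ m) ''
    (Set.Ioo 0 T ×ˢ (Set.univ : Set H)))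

open Set Filter Topology

theorem csInf_image_le_csInf_image_add {α : Type*} {S : Set α} {f g : α → ℝ} {η c : ℝ}
    (hS : S.Nonempty) (hf : BddBelow (f '' S)) (hη : 0 < η)
    (h : ∀ p ∈ S, g p < sInf (g '' S) + η → f p ≤ g p + c) :
    sInf (f '' S) ≤ sInf (g '' S) + c := by
  refine le_of_forall_pos_le_add fun δ hδ => ?_
  obtain ⟨_, ⟨p, hp, rfl⟩, hlt⟩ := Real.lt_sInf_add_pos (hS.image g) (lt_min hδ hη)
  have hfp := csInf_le hf (mem_image_of_mem f hp)
  have hgp := h p hp (hlt.trans_le (by gcongr; exact min_le_right δ η))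
  linarith [min_le_left δ η]

theorem LinearMap.IsSymmetric.inner_map_self_sub_inner_map_self {E : Type*}
    [NormedAddCommGroup E] [InnerProductSpace ℝ E] {A : E →ₗ[ℝ] E} (hA : A.IsSymmetric)
    (a b : E) : ⟪A a, a⟫_ℝ - ⟪A b, b⟫_ℝ = ⟪A (a - b), a + b⟫_ℝ := by
  rw [map_sub, inner_sub_left, inner_add_right, inner_add_right, hA b a, real_inner_comm (A a) b]
  ring

theorem tendsto_mul_rpow_sub_mul_rpow_atTop {k m : ℝ} (lam C : ℝ) (hm : 0 < m) (hkm : k < m)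
    (hlam : 0 < lam) : Tendsto (fun r : ℝ => lam * r ^ m - C * r ^ k) atTop atTop := by
  have hlim : Tendsto (fun r : ℝ => lam - C * r ^ (-(m - k))) atTop (𝓝 lam) := by
    simpa using (tendsto_const_nhds (x := lam)).sub
      ((tendsto_rpow_neg_atTop (sub_pos.mpr hkm)).const_mul C)
  refine ((tendsto_rpow_atTop hm).atTop_mul_pos hlam hlim).congr' ?_
  filter_upwards [eventually_gt_atTop 0] with r hr
  rw [mul_sub, ← mul_assoc, mul_comm (r ^ m) C, mul_assoc, ← Real.rpow_add hr]
  ring_nf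

theorem bddBelow_mul_rpow_sub_mul_rpow {k m : ℝ} (lam C : ℝ) (hk : 0 ≤ k) (hm : 0 < m)
    (hkm : k < m) (hlam : 0 < lam) :
    BddBelow ((fun r : ℝ => lam * r ^ m - C * r ^ k) '' Ici 0) := by
  obtain ⟨ρ, hρ⟩ := tendsto_atTop_atTop.mp (tendsto_mul_rpow_sub_mul_rpow_atTop lam C hm hkm hlam) 0
  refine ⟨min 0 (-(|C| * ρ ^ k)), ?_⟩
  rintro _ ⟨r, hr, rfl⟩
  rcases le_total ρ r with hρr | hrρ
  · exact (min_le_left _ _).trans (hρ r hρr)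
  · have hCr : C * r ^ k ≤ |C| * ρ ^ k :=
      (mul_le_mul_of_nonneg_right (le_abs_self C) (Real.rpow_nonneg hr k)).trans
        (mul_le_mul_of_nonneg_left (Real.rpow_le_rpow hr hrρ hk) (abs_nonneg C))
    have hlr : 0 ≤ lam * r ^ m := mul_nonneg hlam.le (Real.rpow_nonneg hr m)
    exact (min_le_right _ _).trans (by linarith)

section InfConv

variable {H : Type*} [NormedAddCommGroup H] [InnerProductSpace ℝ H]
  (B : H →L[ℝ] H) (T m K lam ε β : ℝ) (w : ℝ → H → ℝ)

noncomputable def infConvObjective (t : ℝ) (x : H) (p : ℝ × H) : ℝ :=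
  w p.1 p.2 + ⟪B (x - p.2), x - p.2⟫_ℝ / (2 * ε) + (t - p.1) ^ 2 / (2 * β)
    + lam * Real.exp (2 * m * K * (T - p.1)) * ‖p.2‖ ^ m

variable {B T m K lam ε β w}

theorem le_infConvObjective {C k : ℝ} (hBpos : ∀ x : H, 0 ≤ ⟪B x, x⟫_ℝ) (hm : 0 ≤ m)
    (hK : 0 ≤ K) (hlam : 0 ≤ lam) (hε : 0 ≤ ε) (hβ : 0 ≤ β)
    (hgrowth : ∀ t ∈ Ioo (0 : ℝ) T, ∀ x : H, -C * (1 + ‖x‖ ^ k) ≤ w t x)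
    (t : ℝ) (x : H) {p : ℝ × H} (hp : p.1 ∈ Ioo 0 T) :
    -C + (lam * ‖p.2‖ ^ m - C * ‖p.2‖ ^ k) ≤ infConvObjective B T m K lam ε β w t x p := by
  have hw := hgrowth p.1 hp p.2
  have hB : 0 ≤ ⟪B (x - p.2), x - p.2⟫_ℝ / (2 * ε) := div_nonneg (hBpos _) (by positivity)
  have hexp : 1 ≤ Real.exp (2 * m * K * (T - p.1)) :=
    Real.one_le_exp (mul_nonneg (by positivity) (sub_nonneg.mpr hp.2.le))
  have hpen : lam * ‖p.2‖ ^ m ≤ lam * Real.exp (2 * m * K * (T - p.1)) * ‖p.2‖ ^ m := by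
    rw [mul_right_comm]
    exact le_mul_of_one_le_right (by positivity) hexp
  have ht : 0 ≤ (t - p.1) ^ 2 / (2 * β) := by positivity
  unfold infConvObjective
  linarith

theorem bddBelow_infConvObjective_image {C k : ℝ} (hBpos : ∀ x : H, 0 ≤ ⟪B x, x⟫_ℝ)
    (hk : 0 ≤ k) (hkm : k < m) (hK : 0 ≤ K) (hlam : 0 < lam) (hε : 0 ≤ ε) (hβ : 0 ≤ β)
    (hgrowth : ∀ t ∈ Ioo (0 : ℝ) T, ∀ x : H, -C * (1 + ‖x‖ ^ k) ≤ w t x) (t : ℝ) (x : H) :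
    BddBelow (infConvObjective B T m K lam ε β w t x '' (Ioo 0 T ×ˢ univ)) := by
  have hm : 0 < m := hk.trans_lt hkm
  obtain ⟨b, hb⟩ := bddBelow_mul_rpow_sub_mul_rpow lam C hk hm hkm hlam
  refine ⟨-C + b, ?_⟩
  rintro _ ⟨p, hp, rfl⟩
  have := hb (mem_image_of_mem _ (norm_nonneg p.2 : ‖p.2‖ ∈ Ici 0))
  linarith [le_infConvObjective hBpos hm.le hK hlam.le hε hβ hgrowth t x hp.1]

theorem exists_norm_le_of_infConvObjective_lt {C k : ℝ} (hBpos : ∀ x : H, 0 ≤ ⟪B x, x⟫_ℝ)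
    (hk : 0 ≤ k) (hkm : k < m) (hK : 0 ≤ K) (hlam : 0 < lam) (hε : 0 ≤ ε) (hβ : 0 ≤ β)
    (hgrowth : ∀ t ∈ Ioo (0 : ℝ) T, ∀ x : H, -C * (1 + ‖x‖ ^ k) ≤ w t x) (A : ℝ) :
    ∃ ρ, 0 ≤ ρ ∧ ∀ (t : ℝ) (x : H) (p : ℝ × H), p.1 ∈ Ioo 0 T →
      infConvObjective B T m K lam ε β w t x p < A → ‖p.2‖ ≤ ρ := by
  have hm : 0 < m := hk.trans_lt hkm
  obtain ⟨ρ, hρ⟩ := tendsto_atTop_atTop.mp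
    (tendsto_mul_rpow_sub_mul_rpow_atTop lam C hm hkm hlam) (A + C)
  refine ⟨max ρ 0, le_max_right ρ 0, fun t x p hp hlt => ?_⟩
  by_contra! hgt
  have := hρ ‖p.2‖ ((le_max_left ρ 0).trans hgt.le)
  linarith [le_infConvObjective hBpos hm.le hK hlam.le hε hβ hgrowth t x hp]

theorem infConvObjective_sub_le (hB : (B : H →ₗ[ℝ] H).IsSymmetric) (hε : 0 ≤ ε) (hβ : 0 ≤ β)
    (t s : ℝ) (x y : H) (p : ℝ × H) :
    infConvObjective B T m K lam ε β w t x p - infConvObjective B T m K lam ε β w s y p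
      ≤ ‖B (x - y)‖ * ‖(x - p.2) + (y - p.2)‖ / (2 * ε)
        + |t - s| * |(t - p.1) + (s - p.1)| / (2 * β) := by
  have hx : ⟪B (x - p.2), x - p.2⟫_ℝ - ⟪B (y - p.2), y - p.2⟫_ℝ
      = ⟪B (x - y), (x - p.2) + (y - p.2)⟫_ℝ := by
    rw [← sub_sub_sub_cancel_right x y p.2]
    exact hB.inner_map_self_sub_inner_map_self _ _
  calc _ = (⟪B (x - p.2), x - p.2⟫_ℝ - ⟪B (y - p.2), y - p.2⟫_ℝ) / (2 * ε)
        + (t - s) * ((t - p.1) + (s - p.1)) / (2 * β) := by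
        unfold infConvObjective; ring
    _ ≤ _ := by
      rw [hx, ← abs_mul]
      gcongr
      · exact real_inner_le_norm _ _
      · exact le_abs_self _

theorem infConvObjective_le_add (hB : (B : H →ₗ[ℝ] H).IsSymmetric) (hε : 0 < ε) (hβ : 0 < β)
    {R ρ t s : ℝ} {x y : H} {p : ℝ × H} (ht : t ∈ Ioo 0 T) (hs : s ∈ Ioo 0 T)
    (hp : p.1 ∈ Ioo 0 T) (hx : ‖x‖ ≤ R) (hy : ‖y‖ ≤ R) (hpρ : ‖p.2‖ ≤ ρ) :
    infConvObjective B T m K lam ε β w t x p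
      ≤ infConvObjective B T m K lam ε β w s y p
        + (T / β + (R + ρ) / ε) * (|t - s| + ‖B (x - y)‖) := by
  have hxy : ‖(x - p.2) + (y - p.2)‖ ≤ 2 * (R + ρ) := by
    calc _ ≤ ‖x - p.2‖ + ‖y - p.2‖ := norm_add_le _ _
      _ ≤ (‖x‖ + ‖p.2‖) + (‖y‖ + ‖p.2‖) := add_le_add (norm_sub_le _ _) (norm_sub_le _ _)
      _ ≤ 2 * (R + ρ) := by linarith
  have hts : |(t - p.1) + (s - p.1)| ≤ 2 * T :=
    abs_le.mpr ⟨by linarith [ht.1, hs.1, hp.2], by linarith [ht.2, hs.2, hp.1]⟩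
  have hdiff := infConvObjective_sub_le (T := T) (m := m) (K := K) (lam := lam) (w := w)
    hB hε.le hβ.le t s x y p
  have hbound : ‖B (x - y)‖ * ‖(x - p.2) + (y - p.2)‖ / (2 * ε)
      + |t - s| * |(t - p.1) + (s - p.1)| / (2 * β)
      ≤ ‖B (x - y)‖ * (2 * (R + ρ)) / (2 * ε) + |t - s| * (2 * T) / (2 * β) := by
    gcongr
  calc _ ≤ infConvObjective B T m K lam ε β w s y p
        + (‖B (x - y)‖ * (2 * (R + ρ)) / (2 * ε) + |t - s| * (2 * T) / (2 * β)) := by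
        linarith
    _ = infConvObjective B T m K lam ε β w s y p
        + ((R + ρ) / ε * ‖B (x - y)‖ + T / β * |t - s|) := by
        field_simp
    _ ≤ _ := by
        have hRρ : 0 ≤ (R + ρ) / ε * |t - s| :=
          mul_nonneg (div_nonneg (by linarith [norm_nonneg x, norm_nonneg p.2]) hε.le)
            (abs_nonneg _)
        have hT : 0 ≤ T / β * ‖B (x - y)‖ :=
          mul_nonneg (div_nonneg (by linarith [ht.1, ht.2]) hβ.le) (norm_nonneg _)
        linarith

theorem infConv_le_of_norm_le (hm : m ≠ 0) (hε : 0 ≤ ε) {s R M : ℝ} {y : H}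
    (hs : s ∈ Ioo 0 T)
    (hbb : BddBelow (infConvObjective B T m K lam ε β w s y '' (Ioo 0 T ×ˢ univ)))
    (hw : w s 0 ≤ M) (hy : ‖y‖ ≤ R) :
    infConv B T m K lam ε β w s y ≤ M + ‖B‖ * R ^ 2 / (2 * ε) := by
  have hBy : ⟪B y, y⟫_ℝ ≤ ‖B‖ * R ^ 2 :=
    calc ⟪B y, y⟫_ℝ ≤ ‖B y‖ * ‖y‖ := real_inner_le_norm _ _
      _ ≤ ‖B‖ * ‖y‖ * ‖y‖ := by gcongr; exact B.le_opNorm y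
      _ ≤ ‖B‖ * R ^ 2 := by rw [mul_assoc, ← sq]; gcongr
  calc infConv B T m K lam ε β w s y ≤ infConvObjective B T m K lam ε β w s y (s, 0) :=
        csInf_le hbb (mem_image_of_mem _ ⟨hs, mem_univ _⟩)
    _ = w s 0 + ⟪B y, y⟫_ℝ / (2 * ε) := by simp [infConvObjective, Real.zero_rpow hm]
    _ ≤ M + ‖B‖ * R ^ 2 / (2 * ε) := by gcongr

theorem infConv_le_infConv_add (hB : (B : H →ₗ[ℝ] H).IsSymmetric) (hε : 0 < ε) (hβ : 0 < β)
    {R ρ t s : ℝ} {x y : H}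
    (hbb : BddBelow (infConvObjective B T m K lam ε β w t x '' (Ioo 0 T ×ˢ univ)))
    (ht : t ∈ Ioo 0 T) (hs : s ∈ Ioo 0 T) (hx : ‖x‖ ≤ R) (hy : ‖y‖ ≤ R)
    (hnear : ∀ p ∈ Ioo 0 T ×ˢ (univ : Set H),
      infConvObjective B T m K lam ε β w s y p < infConv B T m K lam ε β w s y + 1 → ‖p.2‖ ≤ ρ) :
    infConv B T m K lam ε β w t x
      ≤ infConv B T m K lam ε β w s y + (T / β + (R + ρ) / ε) * (|t - s| + ‖B (x - y)‖) :=
  csInf_image_le_csInf_image_add ⟨(s, 0), hs, mem_univ _⟩ hbb one_pos fun p hp hlt =>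
    infConvObjective_le_add hB hε hβ ht hs hp.1 hx hy (hnear p hp hlt)

end InfConv

theorem infConv_lipschitz_estimate_general
    {H : Type*} [NormedAddCommGroup H] [InnerProductSpace ℝ H] [CompleteSpace H]
    (B : H →L[ℝ] H) (hBsa : IsSelfAdjoint B) (hBpos : ∀ x : H, 0 ≤ ⟪B x, x⟫_ℝ)
    (T C k m K lam ε β : ℝ)
    (hT : 0 < T) (hk : 0 ≤ k) (hkm : k < m)
    (hK : 0 < K) (hlam : 0 < lam) (hε : 0 < ε) (hβ : 0 < β)
    (w : ℝ → H → ℝ)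
    (hbdd : ∀ R > (0 : ℝ), ∃ M : ℝ, ∀ t ∈ Set.Ioo (0 : ℝ) T, ∀ x : H, ‖x‖ ≤ R → |w t x| ≤ M)
    (hgrowth : ∀ t ∈ Set.Ioo (0 : ℝ) T, ∀ x : H, -C * (1 + ‖x‖ ^ k) ≤ w t x) :
    ∀ R > (0 : ℝ), ∃ M > (0 : ℝ), ∀ t ∈ Set.Ioo (0 : ℝ) T, ∀ s ∈ Set.Ioo (0 : ℝ) T,
      ∀ x y : H, ‖x‖ < R → ‖y‖ < R →
        |infConv B T m K lam ε β w t x - infConv B T m K lam ε β w s y|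
          ≤ M * (|t - s| + ‖B (x - y)‖) := by
  intro R _
  have hbb := bddBelow_infConvObjective_image hBpos hk hkm hK.le hlam hε.le hβ.le hgrowth
  obtain ⟨M₁, hM₁⟩ := hbdd 1 one_pos
  set U := M₁ + ‖B‖ * R ^ 2 / (2 * ε)
  have hU : ∀ s ∈ Ioo 0 T, ∀ y : H, ‖y‖ ≤ R → infConv B T m K lam ε β w s y ≤ U :=
    fun s hs y hy => infConv_le_of_norm_le (hk.trans_lt hkm).ne' hε.le hs (hbb s y)
      (le_of_abs_le (hM₁ s hs 0 (by simp))) hy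
  obtain ⟨ρ, hρ, hnear⟩ := exists_norm_le_of_infConvObjective_lt hBpos hk hkm hK.le hlam hε.le
    hβ.le hgrowth (U + 1)
  have key : ∀ t ∈ Ioo 0 T, ∀ s ∈ Ioo 0 T, ∀ x y : H, ‖x‖ < R → ‖y‖ < R →
      infConv B T m K lam ε β w t x
        ≤ infConv B T m K lam ε β w s y + (T / β + (R + ρ) / ε) * (|t - s| + ‖B (x - y)‖) :=
    fun t ht s hs x y hx hy => infConv_le_infConv_add hBsa.isSymmetric hε hβ (hbb t x) ht hs
      hx.le hy.le fun p hp hlt => hnear s y p hp.1 (by linarith [hU s hs y hy.le])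
  refine ⟨T / β + (R + ρ) / ε, by positivity,
    fun t ht s hs x y hx hy => abs_sub_le_iff.mpr ⟨?_, ?_⟩⟩
  · linarith [key t ht s hs x y hx hy]
  · have := key s hs t ht y x hy hx
    rw [abs_sub_comm, ← norm_neg, ← map_neg, neg_sub] at this
    linarith

/-- Lemma 4.2(i) (inf-convolution case): if `w` is bounded on bounded sets and
`w(t,x) ≥ −C(1+‖x‖^k)` with `k < m`, then for every `R > 0` the inf-convolution
`v = w_{λ,ε,β}` satisfies `|v(t,x) − v(s,y)| ≤ M(|t−s| + ‖x−y‖₋₂)` on `(0,T) × B_R`,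
where `‖z‖₋₂ = ‖Bz‖`. -/
theorem infConv_lipschitz_estimate
    {H : Type*} [NormedAddCommGroup H] [InnerProductSpace ℝ H] [CompleteSpace H]
    [TopologicalSpace.SeparableSpace H]
    (B : H →L[ℝ] H) (hBsa : IsSelfAdjoint B) (hBpos : ∀ x : H, 0 ≤ ⟪B x, x⟫_ℝ)
    (T C k m K lam ε β : ℝ)
    (hT : 0 < T) (hC : 0 < C) (hk : 0 ≤ k) (hkm : k < m) (hm : 2 ≤ m)
    (hK : 0 < K) (hlam : 0 < lam) (hε : 0 < ε) (hβ : 0 < β)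
    (w : ℝ → H → ℝ)
    (hbdd : ∀ R > (0 : ℝ), ∃ M : ℝ, ∀ t ∈ Set.Ioo (0 : ℝ) T, ∀ x : H, ‖x‖ ≤ R → |w t x| ≤ M)
    (hgrowth : ∀ t ∈ Set.Ioo (0 : ℝ) T, ∀ x : H, -C * (1 + ‖x‖ ^ k) ≤ w t x) :
    ∀ R > (0 : ℝ), ∃ M > (0 : ℝ), ∀ t ∈ Set.Ioo (0 : ℝ) T, ∀ s ∈ Set.Ioo (0 : ℝ) T,
      ∀ x y : H, ‖x‖ < R → ‖y‖ < R →
        |infConv B T m K lam ε β w t x - infConv B T m K lam ε β w s y|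
          ≤ M * (|t - s| + ‖B (x - y)‖) :=
  infConv_lipschitz_estimate_general B hBsa hBpos T C k m K lam ε β hT hk hkm hK hlam hε hβ w hbdd
    hgrowth
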